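/- Let N ≥ 1, r ≥ 1 and n ≥ 1 be integers. Then B_{N,n}^{(r+1)}(x) = (1/N)·(N − n/r)·B_{N,n}^{(r)}(x) + (1/N)·(n/r)·(x − r)·B_{N,n−1}^{(r)}(x) as an identity of polynomials in ℚ[x]. -/

import Mathlib

/-! Write `θ = t·d/dt`. Applying `θ` to `F_N(t)·(e^t − T_{N−1}(t)) = t^N/N!`, with
`θ(e^t − T_{N−1}) = t(e^t − T_{N−1}) + N t^N/N!` and `θ(t^N/N!) = N t^N/N!`, and cancelling the
nonzero series `e^t − T_{N−1}`, gives the Riccati equation `θF = N F − t F − N F²`.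
Hence `G_r = F^r e^{xt}` satisfies `θG_r = rN G_r + (x − r) t G_r − rN G_{r+1}`, and comparing
coefficients of `tⁿ/n!` gives `rN B^{(r+1)}_n = (rN − n) B^{(r)}_n + n (x − r) B^{(r)}_{n−1}`. -/

theorem inv_factorial_succ_mul (m : ℕ) :
    ((m + 1).factorial : ℚ)⁻¹ * (m + 1) = (m.factorial : ℚ)⁻¹ := by
  rw [Nat.factorial_succ]
  push_cast
  field_simp

namespace PowerSeries

theorem map_derivative {R S : Type*} [CommSemiring R] [CommSemiring S] (f : R →+* S)
    (g : R⟦X⟧) :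
    map f (d⁄dX R g) = d⁄dX S (map f g) := by
  ext n
  simp [coeff_derivative]

variable {R : Type*} [CommRing R]

theorem X_mul_derivative_pow_mul {A e : R⟦X⟧} {N x : R}
    (hA : X * d⁄dX R A = C N * A - X * A - C N * A ^ 2) (he : d⁄dX R e = C x * e) (r : ℕ) :
    X * d⁄dX R (A ^ r * e) = C (r * N) * (A ^ r * e) + C (x - r) * (X * (A ^ r * e))
      - C (r * N) * (A ^ (r + 1) * e) := by
  rw [Derivation.leibniz, derivative_pow, he, smul_eq_mul, smul_eq_mul, map_sub, map_mul,
    map_natCast]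
  cases r with
  | zero => simp [mul_left_comm]
  | succ k =>
    rw [Nat.add_sub_cancel]
    push_cast
    linear_combination ((k + 1 : R⟦X⟧) * A ^ k * e) * hA

section Egf

variable [Algebra ℚ R]

noncomputable def egf (a : ℕ → R) : R⟦X⟧ :=
  mk fun m => (m.factorial : ℚ)⁻¹ • a m

@[simp]
theorem coeff_egf (a : ℕ → R) (m : ℕ) : coeff m (egf a) = (m.factorial : ℚ)⁻¹ • a m :=
  coeff_mk _ _

theorem egf_injective : Function.Injective (egf : (ℕ → R) → R⟦X⟧) := by
  intro a b h
  funext m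
  have hm := congrArg (coeff m) h
  rw [coeff_egf, coeff_egf] at hm
  exact smul_right_injective R (inv_ne_zero (Nat.cast_ne_zero.mpr m.factorial_ne_zero)) hm

theorem egf_add (a b : ℕ → R) : egf (a + b) = egf a + egf b := by
  ext m
  simp [smul_add]

theorem egf_sub (a b : ℕ → R) : egf (a - b) = egf a - egf b := by
  ext m
  simp [smul_sub]

theorem C_mul_egf (c : R) (a : ℕ → R) : C c * egf a = egf fun m => c * a m := by
  ext m
  simp [coeff_C_mul]

theorem derivative_egf (a : ℕ → R) : d⁄dX R (egf a) = egf fun m => a (m + 1) := by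
  ext m
  rw [coeff_derivative, coeff_egf, coeff_egf, ← inv_factorial_succ_mul m, Algebra.smul_def,
    Algebra.smul_def, map_mul]
  push_cast
  ring

theorem X_mul_egf (a : ℕ → R) : X * egf a = egf fun m => m * a (m - 1) := by
  ext (_ | m)
  · simp
  · rw [coeff_succ_X_mul, coeff_egf, coeff_egf, ← inv_factorial_succ_mul m, Algebra.smul_def,
      Algebra.smul_def, map_mul]
    push_cast
    ring

theorem X_mul_derivative_egf (a : ℕ → R) : X * d⁄dX R (egf a) = egf fun m => m * a m := by
  rw [derivative_egf, X_mul_egf]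
  congr 1
  funext m
  cases m <;> simp

theorem derivative_egf_pow (x : R) : d⁄dX R (egf (x ^ ·)) = C x * egf (x ^ ·) := by
  rw [derivative_egf, C_mul_egf]
  simp only [pow_succ']

end Egf

section ExpTail

variable (R) [Algebra ℚ R]

noncomputable def expTail (N : ℕ) : R⟦X⟧ :=
  egf fun j => if N ≤ j then 1 else 0

theorem expTail_ne_zero [Nontrivial R] (N : ℕ) : expTail R N ≠ 0 := by
  intro h
  simpa [expTail, Nat.factorial_ne_zero] using congrArg (coeff N) h

theorem X_mul_derivative_expTail (N : ℕ) :
    X * d⁄dX R (expTail R N) = X * expTail R N + C (N : R) * egf (Pi.single N 1) := by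
  rw [expTail, X_mul_derivative_egf, X_mul_egf, C_mul_egf, ← egf_add]
  congr 1
  funext m
  rcases lt_trichotomy m N with h | rfl | h
  · simp [h.not_ge, h.ne, show ¬ N ≤ m - 1 by omega]
  · rcases m with _ | m <;> simp
  · simp [h.le, h.ne', show N ≤ m - 1 by omega]

theorem X_mul_derivative_egf_single (N : ℕ) :
    X * d⁄dX R (egf (Pi.single N 1 : ℕ → R)) = C (N : R) * egf (Pi.single N 1) := by
  rw [X_mul_derivative_egf, C_mul_egf]
  congr 1
  funext m
  rcases eq_or_ne m N with rfl | h <;> simp [*]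

theorem X_mul_derivative_eq_of_mul_expTail [IsDomain R] {N : ℕ} {F : R⟦X⟧}
    (hF : F * expTail R N = egf (Pi.single N 1)) :
    X * d⁄dX R F = C (N : R) * F - X * F - C (N : R) * F ^ 2 := by
  have h := congrArg (X * d⁄dX R ·) hF
  simp only [Derivation.leibniz, smul_eq_mul] at h
  refine mul_right_cancel₀ (expTail_ne_zero R N) ?_
  linear_combination h - F * X_mul_derivative_expTail R N + X_mul_derivative_egf_single R N
    + (C (N : R) * F - C (N : R)) * hF

end ExpTail

end PowerSeries

open PowerSeries

theorem order_recurrence_of_egf_eq {R : Type*} [CommRing R] [Algebra ℚ R] {N : ℕ} {F : ℚ⟦X⟧}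
    (hF : F * expTail ℚ N = egf (Pi.single N 1)) (x : R) {B : ℕ → ℕ → R}
    (hB : ∀ ρ, egf (B ρ) = map (algebraMap ℚ R) F ^ ρ * egf (x ^ ·)) (r n : ℕ) :
    (r * N : R) * B (r + 1) n = (r * N - n : R) * B r n + n * (x - r) * B r (n - 1) := by
  have hA := congrArg (map (algebraMap ℚ R)) (X_mul_derivative_eq_of_mul_expTail ℚ hF)
  simp only [map_sub, map_mul, map_pow, map_X, map_C,
    map_natCast (algebraMap ℚ R), map_derivative] at hA
  have h := X_mul_derivative_pow_mul hA (derivative_egf_pow x) r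
  rw [← hB, ← hB, X_mul_derivative_egf, X_mul_egf, C_mul_egf, C_mul_egf, C_mul_egf, ← egf_add,
    ← egf_sub] at h
  have hn := congrFun (egf_injective h) n
  simp only [Pi.add_apply, Pi.sub_apply] at hn
  linear_combination hn

theorem higher_order_hypergeometric_bernoulli_order_recurrence_general
    (N r n : ℕ) (hN : 1 ≤ N) (hr : 1 ≤ r)
    (F : PowerSeries ℚ)
    (hF : F * (PowerSeries.mk fun j => if N ≤ j then ((j.factorial : ℚ))⁻¹ else 0)
        = PowerSeries.mk fun j => if j = N then ((N.factorial : ℚ))⁻¹ else 0)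
    (Br : ℕ → ℕ → Polynomial ℚ)
    (hBr : ∀ ρ : ℕ, PowerSeries.mk (fun m => ((m.factorial : ℚ))⁻¹ • Br ρ m)
        = (PowerSeries.map (Polynomial.C : ℚ →+* Polynomial ℚ) F) ^ ρ
            * PowerSeries.mk (fun m => ((m.factorial : ℚ))⁻¹ • (Polynomial.X : Polynomial ℚ) ^ m)) :
    Br (r + 1) n
      = (((N : ℚ))⁻¹ * ((N : ℚ) - (n : ℚ) / (r : ℚ))) • Br r n
        + (((N : ℚ))⁻¹ * ((n : ℚ) / (r : ℚ))) •
            ((Polynomial.X - Polynomial.C (r : ℚ)) * Br r (n - 1)) := by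
  have hF' : F * expTail ℚ N = egf (Pi.single N 1) := by
    convert hF using 2 <;> ext j
    · simp [expTail]
    · by_cases hj : j = N <;> simp [hj]
  have h := order_recurrence_of_egf_eq hF' Polynomial.X hBr r n
  have hrN : (r * N : ℚ) ≠ 0 := by positivity
  rw [show (N : ℚ)⁻¹ * (N - n / r) = ((r : ℚ) * N)⁻¹ * (r * N - n) by field_simp,
    show (N : ℚ)⁻¹ * (n / r) = ((r : ℚ) * N)⁻¹ * n by field_simp, mul_smul, mul_smul, ← smul_add,
    eq_inv_smul_iff₀ hrN]
  simp only [Polynomial.smul_eq_C_mul, map_mul, map_sub, map_natCast]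
  linear_combination h

/-- Lemma 2: `B_{N,n}^{(r+1)}(x) = (1/N)(N - n/r)·B_{N,n}^{(r)}(x)
  + (1/N)(n/r)(x - r)·B_{N,n-1}^{(r)}(x)` for `n ≥ 1`.
Here `Br ρ m = B_{N,m}^{(ρ)}(x)` is the family of higher order hypergeometric Bernoulli
polynomials, whose exponential generating function (in `t`) is `F_N(t)^ρ · e^{xt}`, where
`F_N(t) ∈ ℚ⟦t⟧` is the unique power series with `F_N(t)·(e^t - T_{N-1}(t)) = t^N/N!`. -/
theorem higher_order_hypergeometric_bernoulli_order_recurrence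
    (N r n : ℕ) (hN : 1 ≤ N) (hr : 1 ≤ r) (hn : 1 ≤ n)
    (F : PowerSeries ℚ)
    (hF : F * (PowerSeries.mk fun j => if N ≤ j then ((j.factorial : ℚ))⁻¹ else 0)
        = PowerSeries.mk fun j => if j = N then ((N.factorial : ℚ))⁻¹ else 0)
    (Br : ℕ → ℕ → Polynomial ℚ)
    (hBr : ∀ ρ : ℕ, PowerSeries.mk (fun m => ((m.factorial : ℚ))⁻¹ • Br ρ m)
        = (PowerSeries.map (Polynomial.C : ℚ →+* Polynomial ℚ) F) ^ ρ
            * PowerSeries.mk (fun m => ((m.factorial : ℚ))⁻¹ • (Polynomial.X : Polynomial ℚ) ^ m)) :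
    Br (r + 1) n
      = (((N : ℚ))⁻¹ * ((N : ℚ) - (n : ℚ) / (r : ℚ))) • Br r n
        + (((N : ℚ))⁻¹ * ((n : ℚ) / (r : ℚ))) •
            ((Polynomial.X - Polynomial.C (r : ℚ)) * Br r (n - 1)) :=
  higher_order_hypergeometric_bernoulli_order_recurrence_general N r n hN hr F hF Br hBr
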